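/- arXiv:2007.08845 — 4 statements merged into one kernel-verified Lean document; each statement's English description precedes it below -/
import Mathlib

section
/- A Hausdorff topological space (Y,τ) is a continuous open image of the Sorgenfrey line (i.e., there exists a surjection f from the Sorgenfrey line onto Y that is continuous and an open map) if and only if there exists a Sorgenfrey base for (Y,τ). -/
open Set Filter Topology TopologicalSpace Function

noncomputable section

/-- The Sorgenfrey topology on `ℝ`: generated by half-open intervals `[a, b)`. -/
def sorgenfreyTop : TopologicalSpace ℝ :=
  TopologicalSpace.generateFrom {s : Set ℝ | ∃ a b : ℝ, s = Set.Ico a b}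

/-- The initial segment `p↾n` of an infinite sequence, as a list. -/
def restr (p : ℕ → ℕ) (n : ℕ) : List ℕ := (List.range n).map p

/-- `fruit V p = ⋂ n, V (p↾n)`. -/
def fruit {X : Type*} (V : List ℕ → Set X) (p : ℕ → ℕ) : Set X := ⋂ n, V (restr p n)

/-- A Souslin scheme is covering if `V ⟨⟩ = X` and `V a = ⋃ n, V (a ⌢ n)`. -/
def Covering {X : Type*} (V : List ℕ → Set X) : Prop :=
  V [] = Set.univ ∧ ∀ a : List ℕ, V a = ⋃ n : ℕ, V (a ++ [n])

/-- A Souslin scheme is complete if every fruit is nonempty. -/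
def CompleteScheme {X : Type*} (V : List ℕ → Set X) : Prop :=
  ∀ q : ℕ → ℕ, (fruit V q).Nonempty

/-- A Souslin scheme has strict branches if every fruit is a singleton. -/
def StrictBranches {X : Type*} (V : List ℕ → Set X) : Prop :=
  ∀ q : ℕ → ℕ, ∃ x : X, fruit V q = {x}

/-- A Souslin scheme is locally strict. -/
def LocallyStrict {X : Type*} (V : List ℕ → Set X) : Prop :=
  (∀ a : List ℕ, V a = ⋃ n : ℕ, V (a ++ [n])) ∧
  ∀ a : List ℕ, ∀ m k : ℕ, m ≠ k → V (a ++ [m]) ∩ V (a ++ [k]) = ∅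

/-- `q ◁ p` for infinite sequences: `q↾n = p↾n` and `q n < p n` for some `n`. -/
def tri (q p : ℕ → ℕ) : Prop := ∃ n : ℕ, restr q n = restr p n ∧ q n < p n

/-- `q ⊴ p` for infinite sequences. -/
def trieq (q p : ℕ → ℕ) : Prop := tri q p ∨ q = p

/-- `q ◁ s` where `q` is an infinite sequence and `s` a finite one. -/
def triL (q : ℕ → ℕ) (s : List ℕ) : Prop :=
  ∃ n : ℕ, ∃ h : n < s.length, restr q n = s.take n ∧ q n < s.get ⟨n, h⟩

/-- `rsequences(q, n) = {p | q ◁ p ∧ q↾n = p↾n}`. -/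
def rsequences (q : ℕ → ℕ) (n : ℕ) : Set (ℕ → ℕ) :=
  {p | tri q p ∧ restr q n = restr p n}

/-- `rsubtree(q, n)`: finite sequences `s` such that `q↾n ⊏ s` and `q ◁ s`. -/
def rsubtree (q : ℕ → ℕ) (n : ℕ) : Set (List ℕ) :=
  {s | restr q n <+: s ∧ restr q n ≠ s ∧ triL q s}

/-- `cut(V, q, n) = ⋃ {fruit(V, p) : p ∈ rsequences(q, n)}`. -/
def cut {X : Type*} (V : List ℕ → Set X) (q : ℕ → ℕ) (n : ℕ) : Set X :=
  ⋃ p ∈ rsequences q n, fruit V p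

/-- `branches(V, x) = {q | x ∈ fruit(V, q)}`. -/
def branches {X : Type*} (V : List ℕ → Set X) (x : X) : Set (ℕ → ℕ) :=
  {q | x ∈ fruit V q}

/-- `q` is a `τ`-base branch of `x` in `V`: `q ∈ branches(V, x)` and
`{cut(V, q, m) ∪ {x} : m ∈ ℕ}` is a neighborhood base of open sets at `x`. -/
def IsBaseBranch {X : Type*} (τ : TopologicalSpace X) (V : List ℕ → Set X)
    (q : ℕ → ℕ) (x : X) : Prop :=
  x ∈ fruit V q ∧ (∀ m : ℕ, IsOpen[τ] (cut V q m ∪ {x})) ∧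
    (@nhds X τ x).HasBasis (fun _ : ℕ => True) (fun m : ℕ => cut V q m ∪ {x})

/-- `BB(V, x, τ)`: the set of `τ`-base branches of `x` in `V`. -/
def BB {X : Type*} (τ : TopologicalSpace X) (V : List ℕ → Set X) (x : X) : Set (ℕ → ℕ) :=
  {q | IsBaseBranch τ V q x}

/-- A Sorgenfrey base for a space: an open complete covering Souslin scheme
satisfying (S1) and (S2). -/
def IsSorgenfreyBase {X : Type*} (τ : TopologicalSpace X) (V : List ℕ → Set X) : Prop :=
  (∀ a : List ℕ, IsOpen[τ] (V a)) ∧ CompleteScheme V ∧ Covering V ∧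
  (∀ x : X, ∀ q ∈ branches V x, ∀ n : ℕ, ∃ t ∈ BB τ V x, restr t n = restr q n) ∧
  (∀ q : ℕ → ℕ, ∃ z : X, q ∈ BB τ V z)

/-- The Souslin scheme `S` on the Baire set: `S a = {p | a ⊑ p}`. -/
def SchemeS (a : List ℕ) : Set (ℕ → ℕ) := {p | restr p a.length = a}

/-- The topology `σ_𝕊` on `ℕ → ℕ` generated by the base
`{cut(S, p, n) ∪ {p} : p ∈ ℕ → ℕ, n ∈ ℕ}`. -/
def sigmaS : TopologicalSpace (ℕ → ℕ) :=
  TopologicalSpace.generateFrom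
    {U : Set (ℕ → ℕ) | ∃ p : ℕ → ℕ, ∃ n : ℕ, U = cut SchemeS p n ∪ {p}}

/-!
The Sorgenfrey line carries a Souslin scheme `Sorgenfrey.scheme` of half-open intervals: its
first level consists of the intervals `[z, z + 1)`, `z ∈ ℤ`, and each interval `[a, b)` of it is
split into the consecutive intervals `[b - (b - a) / 2 ^ k, b - (b - a) / 2 ^ (k + 1))`, which
accumulate at `b`. Its fruits are singletons, the resulting map `Sorgenfrey.point` from Baire
space onto `ℝ` is a bijection which (below the first level) turns `◁` into `<`, and so
`cut scheme q m ∪ {point q}` lies between the right half-open neighbourhoods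
`scheme (q↾(m + 1)) ∩ [point q, ∞)` and (for `m ≥ 1`) `scheme (q↾m) ∩ [point q, ∞)` of
`point q`. Thus every branch is a base branch and the scheme is a Sorgenfrey base of the Sorgenfrey line.

A continuous open surjection `f` carries it to the Sorgenfrey base `a ↦ f '' scheme a` of `Y`.
Conversely, if `V` is a Sorgenfrey base of a Hausdorff space, every branch `q` is the base branch
of exactly one point `g q`, and `g ∘ point⁻¹` maps the neighbourhood base of `point q` onto the
neighbourhood base of `g q`; hence it is continuous and open, and it is onto by (S1).
-/

open PiNat

lemma restr_succ (p : ℕ → ℕ) (n : ℕ) : restr p (n + 1) = restr p n ++ [p n] := by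
  simp [restr, List.range_succ]

@[simp] lemma length_restr (p : ℕ → ℕ) (n : ℕ) : (restr p n).length = n := by
  simp [restr]

lemma restr_eq_restr_iff {p q : ℕ → ℕ} {n : ℕ} :
    restr q n = restr p n ↔ p ∈ cylinder q n := by
  simp [restr, List.map_inj_left, mem_cylinder_iff, eq_comm]

lemma rsequences_subset_cylinder (q : ℕ → ℕ) (m : ℕ) : rsequences q m ⊆ cylinder q m :=
  fun _ hp => restr_eq_restr_iff.1 hp.2

lemma cylinder_subset_rsequences {q p : ℕ → ℕ} {m : ℕ} (hp : p ∈ rsequences q m) :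
    ∃ n, cylinder p n ⊆ rsequences q m := by
  obtain ⟨⟨N, hN, hlt⟩, hm⟩ := hp
  refine ⟨max m (N + 1), fun p' hp' => ⟨⟨N, ?_, ?_⟩, ?_⟩⟩
  · rw [hN, restr_eq_restr_iff]
    exact cylinder_anti p (by omega) hp'
  · rwa [hp' N (by omega)]
  · rw [hm, restr_eq_restr_iff]
    exact cylinder_anti p (le_max_left m _) hp'

lemma update_mem_rsequences (q : ℕ → ℕ) (m : ℕ) :
    Function.update q m (q m + 1) ∈ rsequences q m := by
  have : restr q m = restr (Function.update q m (q m + 1)) m :=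
    restr_eq_restr_iff.2 fun i hi => by simp [hi.ne]
  exact ⟨⟨m, this, by simp⟩, this⟩

lemma rsequences_anti (q : ℕ → ℕ) : Antitone (rsequences q) := fun _ _ hmn _ hp =>
  ⟨hp.1, restr_eq_restr_iff.2 (cylinder_anti q hmn (rsequences_subset_cylinder q _ hp))⟩

lemma isOpen_rsequences (q : ℕ → ℕ) (m : ℕ) : IsOpen (rsequences q m) := by
  refine (isTopologicalBasis_cylinders fun _ : ℕ => ℕ).isOpen_iff.2 fun p hp => ?_
  obtain ⟨n, hn⟩ := cylinder_subset_rsequences hp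
  exact ⟨_, ⟨p, n, rfl⟩, self_mem_cylinder p n, hn⟩

lemma tri_or_tri_of_ne {p q : ℕ → ℕ} (h : p ≠ q) : tri q p ∨ tri p q := by
  have hcyl : p ∈ cylinder q (firstDiff p q) := mem_cylinder_firstDiff p q
  rcases (apply_firstDiff_ne h).lt_or_gt with hlt | hlt
  · exact Or.inr ⟨_, restr_eq_restr_iff.2 (mem_cylinder_comm _ _ _ |>.1 hcyl), hlt⟩
  · exact Or.inl ⟨_, restr_eq_restr_iff.2 hcyl, hlt⟩

section Scheme

variable {X : Type*} {V : List ℕ → Set X}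

lemma cut_anti (V : List ℕ → Set X) (q : ℕ → ℕ) : Antitone (cut V q) := fun _ _ hmn =>
  biUnion_subset_biUnion_left (rsequences_anti q hmn)

lemma CompleteScheme.cut_nonempty (hV : CompleteScheme V) (q : ℕ → ℕ) (m : ℕ) :
    (cut V q m).Nonempty :=
  (hV _).mono (subset_biUnion_of_mem (update_mem_rsequences q m))

lemma Covering.exists_mem_fruit (hV : Covering V) (x : X) : ∃ p, x ∈ fruit V p := by
  have hstep (a : List ℕ) : ∃ k, x ∈ V a → x ∈ V (a ++ [k]) := by
    by_cases ha : x ∈ V a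
    · rw [hV.2 a, mem_iUnion] at ha
      exact ha.imp fun _ hk _ => hk
    · exact ⟨0, fun h => absurd h ha⟩
  choose c hc using hstep
  let L : ℕ → List ℕ := fun n => Nat.rec [] (fun _ l => l ++ [c l]) n
  have hL (n : ℕ) : restr (fun i => c (L i)) n = L n := by
    induction n with
    | zero => rfl
    | succ n ih => rw [restr_succ, ih]
  refine ⟨fun i => c (L i), mem_iInter.2 fun n => ?_⟩
  rw [hL]
  induction n with
  | zero => exact hV.1 ▸ mem_univ x
  | succ n ih => exact hc _ ih

lemma cut_eq_image {φ : (ℕ → ℕ) → X} (hφ : ∀ p, φ p ∈ fruit V p)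
    (hfruit : ∀ p n, fruit V p ⊆ φ '' cylinder p n) (q : ℕ → ℕ) (m : ℕ) :
    cut V q m = φ '' rsequences q m := by
  refine Subset.antisymm (iUnion₂_subset fun p hp => ?_) ?_
  · obtain ⟨n, hn⟩ := cylinder_subset_rsequences hp
    exact (hfruit p n).trans (image_mono hn)
  · rintro _ ⟨p, hp, rfl⟩
    exact mem_biUnion hp (hφ p)

variable [TopologicalSpace X] {q : ℕ → ℕ} {x : X}

lemma IsBaseBranch.unique [T2Space X] (hV : CompleteScheme V) {y : X}
    (hx : IsBaseBranch ‹_› V q x) (hy : IsBaseBranch ‹_› V q y) : x = y := by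
  by_contra hxy
  obtain ⟨m, -, m', -, hdisj⟩ := (hx.2.2.disjoint_iff hy.2.2).1 (disjoint_nhds_nhds.2 hxy)
  obtain ⟨z, hz⟩ := hV.cut_nonempty q (max m m')
  exact hdisj.ne_of_mem (Or.inl (cut_anti V q (le_max_left m m') hz))
    (Or.inl (cut_anti V q (le_max_right m m') hz)) rfl

variable {Y : Type*} [TopologicalSpace Y] {W : List ℕ → Set Y} {f : X → Y}

lemma IsBaseBranch.map_nhds_eq {y : Y} (hx : IsBaseBranch ‹_› V q x)
    (hy : IsBaseBranch ‹_› W q y) (hcut : ∀ m, f '' (cut V q m ∪ {x}) = cut W q m ∪ {y}) :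
    map f (𝓝 x) = 𝓝 y :=
  (hx.2.2.map f).eq_of_same_basis (by simpa only [hcut] using hy.2.2)

lemma IsBaseBranch.image (hx : IsBaseBranch ‹_› V q x) (hc : Continuous f) (ho : IsOpenMap f)
    (hfx : f x ∈ fruit W q) (hcut : ∀ m, f '' (cut V q m ∪ {x}) = cut W q m ∪ {f x}) :
    IsBaseBranch ‹_› W q (f x) := by
  refine ⟨hfx, fun m => hcut m ▸ ho _ (hx.2.1 m), ?_⟩
  rw [← ho.map_nhds_eq hc.continuousAt]
  simpa only [hcut] using hx.2.2.map f

end Scheme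

namespace Sorgenfrey

lemma isTopologicalBasis_Ico :
    @IsTopologicalBasis ℝ sorgenfreyTop {s | ∃ a b : ℝ, s = Ico a b} := by
  let := sorgenfreyTop
  refine ⟨?_, eq_univ_of_forall fun x => ⟨Ico x (x + 1), ⟨x, x + 1, rfl⟩, by simp⟩, rfl⟩
  rintro _ ⟨a, b, rfl⟩ _ ⟨c, d, rfl⟩ x hx
  exact ⟨_, ⟨_, _, Ico_inter_Ico⟩, hx, subset_rfl⟩

lemma isOpen_Ico (a b : ℝ) : IsOpen[sorgenfreyTop] (Ico a b) :=
  isOpen_generateFrom_of_mem ⟨a, b, rfl⟩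

lemma mem_nhds_iff {s : Set ℝ} {x : ℝ} :
    s ∈ @nhds ℝ sorgenfreyTop x ↔ ∃ b, x < b ∧ Ico x b ⊆ s := by
  let := sorgenfreyTop
  rw [isTopologicalBasis_Ico.mem_nhds_iff]
  constructor
  · rintro ⟨_, ⟨a, b, rfl⟩, hx, hs⟩
    exact ⟨b, hx.2, (Ico_subset_Ico_left hx.1).trans hs⟩
  · rintro ⟨b, hb, hs⟩
    exact ⟨_, ⟨x, b, rfl⟩, left_mem_Ico.2 hb, hs⟩

lemma Ici_mem_nhds (x : ℝ) : Ici x ∈ @nhds ℝ sorgenfreyTop x :=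
  mem_nhds_iff.2 ⟨x + 1, by linarith, Ico_subset_Ici_self⟩

def childIco (I : ℝ × ℝ) (k : ℕ) : ℝ × ℝ :=
  (I.2 - (I.2 - I.1) / 2 ^ k, I.2 - (I.2 - I.1) / 2 ^ (k + 1))

section childIco

variable {I : ℝ × ℝ} (hI : I.1 < I.2)
include hI

lemma childIco_fst_lt_snd (k : ℕ) : (childIco I k).1 < (childIco I k).2 := by
  have : (I.2 - I.1) / 2 ^ (k + 1) < (I.2 - I.1) / 2 ^ k :=
    div_lt_div_of_pos_left (by linarith) (by positivity)
      (pow_lt_pow_right₀ one_lt_two k.lt_succ_self)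
  simp only [childIco]
  linarith

lemma childIco_sub_le (k : ℕ) : (childIco I k).2 - (childIco I k).1 ≤ (I.2 - I.1) / 2 := by
  have : (I.2 - I.1) / 2 ^ k - (I.2 - I.1) / 2 ^ (k + 1) = (I.2 - I.1) / 2 ^ (k + 1) := by
    field_simp; ring
  simp only [childIco, sub_sub_sub_cancel_left, this]
  exact div_le_div_of_nonneg_left (by linarith) two_pos (le_self_pow₀ one_le_two k.succ_ne_zero)

lemma childIco_snd_lt (k : ℕ) : (childIco I k).2 < I.2 := by
  have : 0 < (I.2 - I.1) / 2 ^ (k + 1) := div_pos (by linarith) (by positivity)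
  simp only [childIco]
  linarith

lemma Ico_childIco_subset (k : ℕ) :
    Ico (childIco I k).1 (childIco I k).2 ⊆ Ico I.1 I.2 := by
  refine Ico_subset_Ico ?_ (childIco_snd_lt hI k).le
  have : (I.2 - I.1) / 2 ^ k ≤ I.2 - I.1 := div_le_self (by linarith) (one_le_pow₀ one_le_two)
  simp only [childIco]
  linarith

lemma childIco_snd_le_fst {k k' : ℕ} (hk : k < k') : (childIco I k).2 ≤ (childIco I k').1 := by
  have : (I.2 - I.1) / 2 ^ k' ≤ (I.2 - I.1) / 2 ^ (k + 1) :=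
    div_le_div_of_nonneg_left (by linarith) (by positivity) (pow_le_pow_right₀ one_le_two hk)
  simp only [childIco]
  linarith

lemma exists_mem_Ico_childIco {x : ℝ} (hx : x ∈ Ico I.1 I.2) :
    ∃ k, x ∈ Ico (childIco I k).1 (childIco I k).2 := by
  have hex : ∃ k, x < (childIco I k).2 := by
    obtain ⟨k, hk⟩ := exists_pow_lt_of_lt_one (div_pos (sub_pos.2 hx.2) (sub_pos.2 hI))
      one_half_lt_one
    refine ⟨k, ?_⟩
    rw [lt_div_iff₀ (sub_pos.2 hI)] at hk
    have : (I.2 - I.1) / 2 ^ (k + 1) < (I.2 - I.1) * (1 / 2) ^ k := by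
      rw [one_div_pow, mul_one_div]
      exact div_lt_div_of_pos_left (sub_pos.2 hI) (by positivity)
        (pow_lt_pow_right₀ one_lt_two k.lt_succ_self)
    simp only [childIco]
    linarith
  classical
  refine ⟨Nat.find hex, ?_, Nat.find_spec hex⟩
  rcases Nat.eq_zero_or_pos (Nat.find hex) with h0 | hpos
  · rw [h0]
    simpa [childIco] using hx.1
  · have := Nat.find_min hex (Nat.sub_lt hpos one_pos)
    rwa [not_lt, childIco, Nat.sub_one_add_one hpos.ne'] at this

end childIco

/-- The value at `[]` is junk: `scheme [] = univ`. -/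
def ends : List ℕ → ℝ × ℝ
  | [] => (0, 1)
  | k :: a => a.foldl childIco ((Denumerable.eqv ℤ).symm k, (Denumerable.eqv ℤ).symm k + 1)

def scheme (a : List ℕ) : Set ℝ := if a = [] then univ else Ico (ends a).1 (ends a).2

lemma ends_append {a : List ℕ} (ha : a ≠ []) (k : ℕ) :
    ends (a ++ [k]) = childIco (ends a) k := by
  obtain ⟨j, a, rfl⟩ := List.exists_cons_of_ne_nil ha
  simp [ends]

lemma ends_fst_lt_snd (a : List ℕ) : (ends a).1 < (ends a).2 := by
  induction a using List.reverseRecOn with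
  | nil => simp [ends]
  | append_singleton a k ih =>
    rcases eq_or_ne a [] with rfl | ha
    · simp [ends]
    · rw [ends_append ha]
      exact childIco_fst_lt_snd ih k

lemma ends_sub_le (a : List ℕ) : (ends a).2 - (ends a).1 ≤ 2 * (1 / 2) ^ a.length := by
  induction a using List.reverseRecOn with
  | nil => norm_num [ends]
  | append_singleton a k ih =>
    rcases eq_or_ne a [] with rfl | ha
    · norm_num [ends]
    · rw [ends_append ha, List.length_append, List.length_singleton, pow_succ]
      linarith [childIco_sub_le (ends_fst_lt_snd a) k]

@[simp] lemma scheme_nil : scheme [] = univ := rfl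

lemma scheme_of_ne_nil {a : List ℕ} (ha : a ≠ []) : scheme a = Ico (ends a).1 (ends a).2 :=
  if_neg ha

lemma mem_scheme_singleton {x : ℝ} {k : ℕ} :
    x ∈ scheme [k] ↔ (Denumerable.eqv ℤ).symm k = ⌊x⌋ := by
  rw [scheme_of_ne_nil (List.cons_ne_nil k []), eq_comm, Int.floor_eq_iff]
  simp [ends]

lemma scheme_append_of_ne_nil {a : List ℕ} (ha : a ≠ []) (k : ℕ) :
    scheme (a ++ [k]) = Ico (childIco (ends a) k).1 (childIco (ends a) k).2 := by
  rw [scheme_of_ne_nil (List.append_ne_nil_of_right_ne_nil a (List.cons_ne_nil k [])),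
    ends_append ha]

lemma isOpen_scheme (a : List ℕ) : IsOpen[sorgenfreyTop] (scheme a) := by
  rcases eq_or_ne a [] with rfl | ha
  · exact @isOpen_univ ℝ sorgenfreyTop
  · rw [scheme_of_ne_nil ha]
    exact isOpen_Ico _ _

lemma scheme_append_subset (a : List ℕ) (k : ℕ) : scheme (a ++ [k]) ⊆ scheme a := by
  rcases eq_or_ne a [] with rfl | ha
  · exact subset_univ _
  · rw [scheme_append_of_ne_nil ha, scheme_of_ne_nil ha]
    exact Ico_childIco_subset (ends_fst_lt_snd a) k

lemma covering_scheme : Covering scheme := by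
  refine ⟨rfl, fun a => Subset.antisymm (fun x hx => mem_iUnion.2 ?_)
    (iUnion_subset (scheme_append_subset a))⟩
  rcases eq_or_ne a [] with rfl | ha
  · exact ⟨Denumerable.eqv ℤ ⌊x⌋, mem_scheme_singleton.2 (Equiv.symm_apply_apply _ _)⟩
  · rw [scheme_of_ne_nil ha] at hx
    simpa only [scheme_append_of_ne_nil ha] using
      exists_mem_Ico_childIco (ends_fst_lt_snd a) hx

lemma lt_of_mem_scheme_append {a : List ℕ} (ha : a ≠ []) {k k' : ℕ} (hk : k < k') {x y : ℝ}
    (hx : x ∈ scheme (a ++ [k])) (hy : y ∈ scheme (a ++ [k'])) : x < y := by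
  rw [scheme_append_of_ne_nil ha] at hx hy
  linarith [hx.2, hy.1, childIco_snd_le_fst (ends_fst_lt_snd a) hk]

lemma eq_of_mem_scheme {a b : List ℕ} (hab : a.length = b.length) {x : ℝ} (ha : x ∈ scheme a)
    (hb : x ∈ scheme b) : a = b := by
  induction a using List.reverseRecOn generalizing b with
  | nil => exact (List.length_eq_zero_iff.1 hab.symm).symm
  | append_singleton a k ih =>
    obtain ⟨b, k', rfl⟩ := (List.eq_nil_or_concat' b).resolve_left (by rintro rfl; simp at hab)
    simp only [List.length_append, List.length_singleton, add_left_inj] at hab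
    obtain rfl := ih hab (scheme_append_subset a k ha) (scheme_append_subset b k' hb)
    rcases eq_or_ne a [] with rfl | hne
    · simpa using (mem_scheme_singleton.1 ha).trans (mem_scheme_singleton.1 hb).symm
    · rcases lt_trichotomy k k' with hk | rfl | hk
      · exact absurd (lt_of_mem_scheme_append hne hk ha hb) (lt_irrefl x)
      · rfl
      · exact absurd (lt_of_mem_scheme_append hne hk hb ha) (lt_irrefl x)

lemma sub_lt_of_mem_scheme {a : List ℕ} (ha : a ≠ []) {x y : ℝ} (hx : x ∈ scheme a)
    (hy : y ∈ scheme a) : y - x < 2 * (1 / 2) ^ a.length := by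
  rw [scheme_of_ne_nil ha] at hx hy
  linarith [hx.1, hy.2, ends_sub_le a]

lemma restr_succ_ne_nil (p : ℕ → ℕ) (n : ℕ) : restr p (n + 1) ≠ [] :=
  List.ne_nil_of_length_pos (by simp)

lemma scheme_restr_anti (p : ℕ → ℕ) : Antitone fun n => scheme (restr p n) :=
  antitone_nat_of_succ_le fun n => by
    simpa only [restr_succ] using scheme_append_subset (restr p n) (p n)

def point (p : ℕ → ℕ) : ℝ := ⨆ n, (ends (restr p (n + 1))).1

lemma point_mem_fruit (p : ℕ → ℕ) : point p ∈ fruit scheme p := by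
  set l := fun n => (ends (restr p (n + 1))).1
  set h := fun n => (ends (restr p (n + 1))).2
  have hmem (n : ℕ) : scheme (restr p (n + 1)) = Ico (l n) (h n) :=
    scheme_of_ne_nil (restr_succ_ne_nil p n)
  have hl (m n : ℕ) : l m < h n := by
    have hk := left_mem_Ico.2 (ends_fst_lt_snd (restr p (max m n + 1)))
    rw [← scheme_of_ne_nil (restr_succ_ne_nil p _)] at hk
    have hkm : _ ∈ scheme (restr p (m + 1)) := scheme_restr_anti p (by omega) hk
    have hkn : _ ∈ scheme (restr p (n + 1)) := scheme_restr_anti p (by omega) hk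
    rw [hmem] at hkm hkn
    exact hkm.1.trans_lt hkn.2
  have hh (n : ℕ) : h (n + 1) < h n := by
    simp only [h, restr_succ p (n + 1), ends_append (restr_succ_ne_nil p n)]
    exact childIco_snd_lt (ends_fst_lt_snd _) _
  refine mem_iInter.2 fun n => scheme_restr_anti p n.le_succ ?_
  show point p ∈ scheme (restr p (n + 1))
  rw [hmem]
  exact ⟨le_ciSup ⟨h 0, forall_mem_range.2 fun m => (hl m 0).le⟩ n,
    (ciSup_le fun m => (hl m (n + 1)).le).trans_lt (hh n)⟩

lemma le_of_mem_fruit_scheme {p : ℕ → ℕ} {x y : ℝ} (hx : x ∈ fruit scheme p)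
    (hy : y ∈ fruit scheme p) : x ≤ y := by
  refine le_of_forall_pos_lt_add fun ε hε => ?_
  obtain ⟨n, hn⟩ := exists_pow_lt_of_lt_one hε one_half_lt_one
  have := sub_lt_of_mem_scheme (restr_succ_ne_nil p n) (mem_iInter.1 hy _) (mem_iInter.1 hx _)
  rw [length_restr, pow_succ] at this
  linarith

lemma fruit_scheme (p : ℕ → ℕ) : fruit scheme p = {point p} :=
  eq_singleton_iff_unique_mem.2 ⟨point_mem_fruit p, fun _ hx =>
    (le_of_mem_fruit_scheme hx (point_mem_fruit p)).antisymm
      (le_of_mem_fruit_scheme (point_mem_fruit p) hx)⟩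

lemma point_surjective : Function.Surjective point := fun x => by
  obtain ⟨p, hp⟩ := covering_scheme.exists_mem_fruit x
  exact ⟨p, ((fruit_scheme p).subst (motive := (x ∈ ·)) hp).symm⟩

lemma point_mem_scheme_restr (p : ℕ → ℕ) (n : ℕ) : point p ∈ scheme (restr p n) :=
  mem_iInter.1 (point_mem_fruit p) n

lemma point_mem_scheme_iff {p : ℕ → ℕ} {a : List ℕ} :
    point p ∈ scheme a ↔ restr p a.length = a :=
  ⟨eq_of_mem_scheme (by simp) (point_mem_scheme_restr p _),
    fun h => h ▸ point_mem_scheme_restr p _⟩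

lemma point_injective : Function.Injective point := fun p p' h => funext fun n => by
  have := point_mem_scheme_iff.1 (h ▸ point_mem_scheme_restr p' (n + 1))
  rw [length_restr] at this
  exact (restr_eq_restr_iff.1 this n n.lt_succ_self).symm

lemma image_point_cylinder (p : ℕ → ℕ) (n : ℕ) :
    point '' cylinder p n = scheme (restr p n) := by
  ext x
  obtain ⟨p', rfl⟩ := point_surjective x
  rw [point_injective.mem_set_image, point_mem_scheme_iff, length_restr, restr_eq_restr_iff,
    mem_cylinder_comm]

lemma isOpenMap_point : @IsOpenMap _ ℝ _ sorgenfreyTop point :=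
  (@IsTopologicalBasis.isOpenMap_iff _ _ _ sorgenfreyTop _
    (isTopologicalBasis_cylinders fun _ : ℕ => ℕ) _).2 <| by
      rintro _ ⟨p, n, rfl⟩
      rw [image_point_cylinder]
      exact isOpen_scheme _

lemma cut_scheme (q : ℕ → ℕ) (m : ℕ) : cut scheme q m = point '' rsequences q m :=
  cut_eq_image point_mem_fruit (fun p n => by
    rw [fruit_scheme, singleton_subset_iff]
    exact mem_image_of_mem _ (self_mem_cylinder p n)) q m

/-- The first level enumerates the intervals `[z, z + 1)` in the order of `Denumerable ℤ`, so
`◁` becomes `<` only for sequences with the same first entry. -/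
lemma point_lt_point {q p : ℕ → ℕ} (h : tri q p) (h0 : q 0 = p 0) : point q < point p := by
  obtain ⟨N, hN, hlt⟩ := h
  obtain ⟨N, rfl⟩ : ∃ M, N = M + 1 := Nat.exists_eq_add_one.2 <| Nat.pos_of_ne_zero <| by
    rintro rfl
    exact hlt.ne h0
  have hq := point_mem_scheme_restr q (N + 2)
  have hp := point_mem_scheme_restr p (N + 2)
  rw [restr_succ] at hq hp
  rw [← hN] at hp
  exact lt_of_mem_scheme_append (restr_succ_ne_nil q N) hlt hq hp

lemma cut_scheme_union_subset (q : ℕ → ℕ) (m : ℕ) :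
    cut scheme q (m + 1) ∪ {point q} ⊆ scheme (restr q (m + 1)) ∩ Ici (point q) := by
  rw [cut_scheme, ← image_point_cylinder]
  rintro _ (⟨p, hp, rfl⟩ | rfl)
  · have hpq := rsequences_subset_cylinder q _ hp
    exact ⟨mem_image_of_mem _ hpq, (point_lt_point hp.1 (hpq 0 m.succ_pos).symm).le⟩
  · exact ⟨mem_image_of_mem _ (self_mem_cylinder q _), self_mem_Ici⟩

lemma scheme_inter_Ici_subset_cut (q : ℕ → ℕ) (m : ℕ) :
    scheme (restr q (m + 1)) ∩ Ici (point q) ⊆ cut scheme q m ∪ {point q} := by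
  rw [cut_scheme, ← image_point_cylinder]
  rintro _ ⟨⟨p, hpq, rfl⟩, hle⟩
  rcases eq_or_ne p q with rfl | hne
  · exact Or.inr rfl
  rcases tri_or_tri_of_ne hne with htri | htri
  · exact Or.inl (mem_image_of_mem _
      ⟨htri, restr_eq_restr_iff.2 (cylinder_anti q m.le_succ hpq)⟩)
  · exact absurd (point_lt_point htri (hpq 0 m.succ_pos)) hle.not_gt

lemma isBaseBranch_scheme (q : ℕ → ℕ) : IsBaseBranch sorgenfreyTop scheme q (point q) := by
  let := sorgenfreyTop
  have hopen (m : ℕ) : IsOpen (cut scheme q m ∪ {point q}) := by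
    refine isOpen_iff_mem_nhds.2 fun z hz => ?_
    rcases hz with hz | rfl
    · rw [cut_scheme] at hz ⊢
      exact mem_of_superset ((isOpenMap_point _ (isOpen_rsequences q m)).mem_nhds hz)
        subset_union_left
    · exact mem_of_superset (inter_mem ((isOpen_scheme _).mem_nhds (point_mem_scheme_restr q _))
        (Ici_mem_nhds _)) (scheme_inter_Ici_subset_cut q m)
  refine ⟨point_mem_fruit q, hopen, ⟨fun t => ⟨fun ht => ?_, fun ⟨m, _, hm⟩ =>
    mem_of_superset ((hopen m).mem_nhds (Or.inr rfl)) hm⟩⟩⟩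
  obtain ⟨b, hb, hbt⟩ := mem_nhds_iff.1 ht
  obtain ⟨n, hn⟩ := exists_pow_lt_of_lt_one (sub_pos.2 hb) one_half_lt_one
  refine ⟨n + 1, trivial, fun y hy => hbt ?_⟩
  obtain ⟨hyq, hy⟩ := cut_scheme_union_subset q n hy
  have := sub_lt_of_mem_scheme (restr_succ_ne_nil q n) (point_mem_scheme_restr q _) hyq
  rw [length_restr, pow_succ] at this
  exact ⟨hy, by linarith⟩

end Sorgenfrey

open Sorgenfrey

section

variable {Y : Type*} [TopologicalSpace Y]

lemma isSorgenfreyBase_image_scheme {f : ℝ → Y} (hc : @Continuous ℝ Y sorgenfreyTop _ f)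
    (ho : @IsOpenMap ℝ Y sorgenfreyTop _ f) (hs : Surjective f) :
    IsSorgenfreyBase ‹_› fun a => f '' scheme a := by
  let := sorgenfreyTop
  set V := fun a => f '' scheme a
  have hfruit (p : ℕ → ℕ) : f (point p) ∈ fruit V p :=
    mem_iInter.2 fun n => mem_image_of_mem f (point_mem_scheme_restr p n)
  have happrox (p : ℕ → ℕ) (n : ℕ) : fruit V p ⊆ (f ∘ point) '' cylinder p n := by
    rw [image_comp, image_point_cylinder]
    exact fun y hy => mem_iInter.1 hy n
  have hbase (q : ℕ → ℕ) : IsBaseBranch ‹_› V q (f (point q)) :=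
    (isBaseBranch_scheme q).image hc ho (hfruit q) fun m => by
      rw [image_union, image_singleton, cut_scheme, cut_eq_image hfruit happrox, image_image]
  refine ⟨fun a => ho _ (isOpen_scheme a), fun q => ⟨_, hfruit q⟩, ⟨?_, fun a => ?_⟩,
    fun y q hq n => ?_, fun q => ⟨_, hbase q⟩⟩
  · simp only [V, scheme_nil, image_univ, hs.range_eq]
  · simp only [V]
    rw [covering_scheme.2 a, image_iUnion]
  · obtain ⟨t, ht, rfl⟩ := happrox q n hq
    exact ⟨t, hbase t, restr_eq_restr_iff.2 (mem_cylinder_comm _ _ _ |>.1 ht)⟩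

lemma IsSorgenfreyBase.exists_continuous_isOpenMap_surjective [T2Space Y]
    {V : List ℕ → Set Y} (hV : IsSorgenfreyBase ‹_› V) :
    ∃ f : ℝ → Y, @Continuous ℝ Y sorgenfreyTop _ f ∧ @IsOpenMap ℝ Y sorgenfreyTop _ f ∧
      Surjective f := by
  let := sorgenfreyTop
  obtain ⟨-, hcomplete, hcovering, hS1, hS2⟩ := hV
  choose g hg using hS2
  have happrox (p : ℕ → ℕ) (n : ℕ) : fruit V p ⊆ g '' cylinder p n := fun y hy => by
    obtain ⟨t, ht, htp⟩ := hS1 y p hy n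
    exact ⟨t, restr_eq_restr_iff.1 htp.symm, (ht.unique hcomplete (hg t)).symm⟩
  set f := g ∘ surjInv point_surjective
  have hf (p : ℕ → ℕ) : f (point p) = g p :=
    congrArg g (leftInverse_surjInv ⟨point_injective, point_surjective⟩ p)
  have hnhds (x : ℝ) : map f (𝓝 x) = 𝓝 (f x) := by
    obtain ⟨q, rfl⟩ := point_surjective x
    rw [hf]
    refine (isBaseBranch_scheme q).map_nhds_eq (hg q) fun m => ?_
    rw [image_union, image_singleton, cut_scheme, cut_eq_image (fun p => (hg p).1) happrox,
      image_image]
    simp only [hf]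
  refine ⟨f, continuous_iff_continuousAt.2 fun x => (hnhds x).le,
    isOpenMap_iff_nhds_le.2 fun x => (hnhds x).ge, fun y => ?_⟩
  obtain ⟨p, hp⟩ := hcovering.exists_mem_fruit y
  obtain ⟨t, -, rfl⟩ := happrox p 0 hp
  exact ⟨point t, hf t⟩

end

/-- A Hausdorff space is a continuous open image of the Sorgenfrey line iff
it has a Sorgenfrey base. -/
theorem stmt0 {Y : Type*} (τ : TopologicalSpace Y) (hT2 : @T2Space Y τ) :
    (∃ f : ℝ → Y, @Continuous ℝ Y sorgenfreyTop τ f ∧ @IsOpenMap ℝ Y sorgenfreyTop τ f ∧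
      Function.Surjective f) ↔
    ∃ V : List ℕ → Set Y, IsSorgenfreyBase τ V :=
  ⟨fun ⟨_, hc, ho, hs⟩ => ⟨_, isSorgenfreyBase_image_scheme hc ho hs⟩,
    fun ⟨_, hV⟩ => hV.exists_continuous_isOpenMap_surjective⟩
end
end

section
/- The family of sets ⋃_{p : ℕ→ℕ} cutBase(S,p,p) = { cut(S,p,n) ∪ {p} : p : ℕ → ℕ, n ∈ ℕ } is a base for a topology on the set ℕ → ℕ, and for every point x : ℕ → ℕ the family cutBase(S,x,x) is a neighborhood base at x in this topology. -/
open Set Filter Topology TopologicalSpace Function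

noncomputable section

lemma restr_eq_iff {p q : ℕ → ℕ} {n : ℕ} :
    restr p n = restr q n ↔ ∀ k < n, p k = q k := by
  simp [restr, List.map_eq_map_iff, List.mem_range]

lemma restr_mono {p q : ℕ → ℕ} {n m : ℕ} (h : restr p n = restr q n) (hm : m ≤ n) :
    restr p m = restr q m := by
  rw [restr_eq_iff] at h ⊢
  exact fun k hk => h k (lt_of_lt_of_le hk hm)

lemma tri_trans {p q r : ℕ → ℕ} (h1 : tri p q) (h2 : tri q r) : tri p r := by
  obtain ⟨n, hn, hn'⟩ := h1
  obtain ⟨m, hm, hm'⟩ := h2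
  rcases lt_trichotomy n m with h | h | h
  · refine ⟨n, hn.trans (restr_mono hm h.le), ?_⟩
    have : q n = r n := restr_eq_iff.mp hm n h
    omega
  · subst h; exact ⟨n, hn.trans hm, hn'.trans hm'⟩
  · refine ⟨m, ?_, ?_⟩
    · rw [restr_mono hn h.le]; exact hm
    · have : p m = q m := restr_eq_iff.mp hn m h
      omega

lemma trieq_trans {p q r : ℕ → ℕ} (h1 : trieq p q) (h2 : trieq q r) : trieq p r := by
  rcases h1 with h1 | rfl
  · rcases h2 with h2 | rfl
    · exact Or.inl (tri_trans h1 h2)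
    · exact Or.inl h1
  · exact h2

lemma fruit_SchemeS (p : ℕ → ℕ) : fruit SchemeS p = {p} := by
  ext q
  simp only [fruit, SchemeS, Set.mem_iInter, Set.mem_setOf_eq, Set.mem_singleton_iff]
  constructor
  · intro h
    funext k
    have := h (k + 1)
    rw [show (restr p (k+1)).length = k + 1 by simp [restr]] at this
    exact restr_eq_iff.mp this k (Nat.lt_succ_self k)
  · rintro rfl n
    rw [show (restr q n).length = n by simp [restr]]

lemma cut_SchemeS (p : ℕ → ℕ) (n : ℕ) : cut SchemeS p n = rsequences p n := by
  ext q
  simp only [cut, Set.mem_iUnion, fruit_SchemeS, Set.mem_singleton_iff]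
  constructor
  · rintro ⟨r, hr, rfl⟩; exact hr
  · intro h; exact ⟨q, h, rfl⟩

lemma mem_B_iff {p x : ℕ → ℕ} {n : ℕ} :
    x ∈ cut SchemeS p n ∪ {p} ↔ trieq p x ∧ restr p n = restr x n := by
  rw [cut_SchemeS]
  simp only [Set.mem_union, rsequences, Set.mem_setOf_eq, Set.mem_singleton_iff, trieq]
  constructor
  · rintro (⟨h1, h2⟩ | rfl)
    · exact ⟨Or.inl h1, h2⟩
    · exact ⟨Or.inr rfl, rfl⟩
  · rintro ⟨h1 | rfl, h2⟩
    · exact Or.inl ⟨h1, h2⟩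
    · exact Or.inr rfl

lemma B_subset {p x : ℕ → ℕ} {n k : ℕ} (hx : x ∈ cut SchemeS p n ∪ {p}) (hk : n ≤ k) :
    cut SchemeS x k ∪ {x} ⊆ cut SchemeS p n ∪ {p} := by
  rw [mem_B_iff] at hx
  intro r hr
  rw [mem_B_iff] at hr ⊢
  exact ⟨trieq_trans hx.1 hr.1, hx.2.trans (restr_mono hr.2 hk)⟩

lemma self_mem_B (x : ℕ → ℕ) (n : ℕ) : x ∈ cut SchemeS x n ∪ {x} :=
  mem_B_iff.mpr ⟨Or.inr rfl, rfl⟩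

/-- The family `{cut(S, p, n) ∪ {p}}` is a base for a topology on `ℕ → ℕ`, and
for every point `x` the family `cutBase(S, x, x)` is a neighborhood base at `x`
in this topology. -/
theorem stmt1 :
    @TopologicalSpace.IsTopologicalBasis (ℕ → ℕ) sigmaS
      {U : Set (ℕ → ℕ) | ∃ p : ℕ → ℕ, ∃ n : ℕ, U = cut SchemeS p n ∪ {p}} ∧
    ∀ x : ℕ → ℕ, (@nhds (ℕ → ℕ) sigmaS x).HasBasis (fun _ : ℕ => True)
      (fun m : ℕ => cut SchemeS x m ∪ {x}) := by
  letI : TopologicalSpace (ℕ → ℕ) := sigmaS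
  have hbasis : TopologicalSpace.IsTopologicalBasis
      {U : Set (ℕ → ℕ) | ∃ p : ℕ → ℕ, ∃ n : ℕ, U = cut SchemeS p n ∪ {p}} := by
    refine ⟨?_, ?_, rfl⟩
    · rintro t1 ⟨p, n, rfl⟩ t2 ⟨q, m, rfl⟩ x ⟨hx1, hx2⟩
      refine ⟨cut SchemeS x (max n m) ∪ {x}, ⟨x, max n m, rfl⟩,
        self_mem_B x _, ?_⟩
      exact Set.subset_inter (B_subset hx1 (le_max_left n m))
        (B_subset hx2 (le_max_right n m))
    · apply Set.eq_univ_of_forall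
      intro x
      exact Set.mem_sUnion.mpr ⟨cut SchemeS x 0 ∪ {x}, ⟨x, 0, rfl⟩, self_mem_B x 0⟩
  refine ⟨hbasis, fun x => ?_⟩
  rw [Filter.hasBasis_iff]
  intro s
  constructor
  · intro hs
    obtain ⟨t, ⟨⟨p, n, rfl⟩, hxt⟩, hts⟩ := hbasis.nhds_hasBasis.mem_iff.mp hs
    exact ⟨n, trivial, (B_subset hxt le_rfl).trans hts⟩
  · rintro ⟨m, -, hms⟩
    exact Filter.mem_of_superset
      ((hbasis.isOpen ⟨x, m, rfl⟩).mem_nhds (self_mem_B x m)) hms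
end
end

section
/- The Sorgenfrey line 𝕊 is homeomorphic to the space (ℕ → ℕ, σ_𝕊). -/
open Set Filter Topology TopologicalSpace Function

noncomputable section

/-!
Code each finite sequence `a` by a half-open interval `cell a ⊆ [0, 1)`: the children
`cell (a ++ [d])`, `d ∈ ℕ`, tile `cell a` from left to right and have geometrically shrinking
widths. A sequence `q : ℕ → ℕ` then codes the unique point common to all `cell (q↾n)`, which gives
an order isomorphism from `ℕ → ℕ` with the lexicographic order onto `[0, 1)`; using `q 0` for the
integer part turns it into a bijection `ℕ → ℕ ≃ ℝ`. This bijection carries the basic `σ_𝕊`-open set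
`{r | q ⊴ r ∧ r↾(m+1) = q↾(m+1)}` onto a half-open interval `[x, x + ε)` whose length tends to `0`
with `m`, so it matches the two bases.
-/

namespace SorgenfreyBaire

lemma restr_eq_restr_iff {q p : ℕ → ℕ} {n : ℕ} : restr q n = restr p n ↔ ∀ k < n, q k = p k := by
  simp only [restr, List.map_inj_left, List.mem_range]

lemma length_restr (q : ℕ → ℕ) (n : ℕ) : (restr q n).length = n := by simp [restr]

lemma restr_succ (q : ℕ → ℕ) (n : ℕ) : restr q (n + 1) = restr q n ++ [q n] := by
  simp [restr, List.range_succ]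

lemma restr_prefix_restr (q : ℕ → ℕ) {m n : ℕ} (h : m ≤ n) : restr q m <+: restr q n :=
  List.prefix_iff_eq_take.2 (by simp [restr, ← List.map_take, List.take_range, h])

lemma restr_eq_restr_of_le {q p : ℕ → ℕ} {m n : ℕ} (hmn : m ≤ n) (h : restr q n = restr p n) :
    restr q m = restr p m :=
  restr_eq_restr_iff.2 fun k hk => restr_eq_restr_iff.1 h k (hk.trans_le hmn)

def tail (q : ℕ → ℕ) (n : ℕ) : ℕ := q (n + 1)

lemma restr_succ_eq_cons (q : ℕ → ℕ) (n : ℕ) : restr q (n + 1) = q 0 :: restr (tail q) n := by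
  simp [restr, List.range_succ_eq_map, tail]

lemma toLex_lt_toLex_iff_tail {q p : ℕ → ℕ} (h0 : q 0 = p 0) :
    toLex q < toLex p ↔ toLex (tail q) < toLex (tail p) := by
  constructor
  · rintro ⟨_ | i, hlt, hi⟩
    · exact absurd h0 hi.ne
    · exact ⟨i, fun j hj => hlt (j + 1) (Nat.succ_lt_succ hj), hi⟩
  · rintro ⟨i, hlt, hi⟩
    refine ⟨i + 1, fun j hj => ?_, hi⟩
    cases j with
    | zero => exact h0
    | succ j => exact hlt j (Nat.succ_lt_succ_iff.1 hj)

lemma toLex_le_toLex_iff_tail {q p : ℕ → ℕ} (h0 : q 0 = p 0) :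
    toLex q ≤ toLex p ↔ toLex (tail q) ≤ toLex (tail p) := by
  rw [← not_lt, ← not_lt]
  exact not_congr (toLex_lt_toLex_iff_tail h0.symm)

lemma tri_iff_toLex_lt {q p : ℕ → ℕ} : tri q p ↔ toLex q < toLex p := by
  simp only [tri, restr_eq_restr_iff]
  rfl

/-- The children of `[l, l + w)` are `[l + w (1 - 2⁻ᵈ), l + w (1 - 2⁻ᵈ⁻¹))`, `d ∈ ℕ`:
they tile `[l, l + w)` from left to right in the order of `d`. -/
def cellStep (c : ℝ × ℝ) (d : ℕ) : ℝ × ℝ := (c.1 + c.2 * (1 - 2⁻¹ ^ d), c.2 * 2⁻¹ ^ (d + 1))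

def cellBounds (a : List ℕ) : ℝ × ℝ := a.foldl cellStep (0, 1)

def left (a : List ℕ) : ℝ := (cellBounds a).1

def width (a : List ℕ) : ℝ := (cellBounds a).2

def cell (a : List ℕ) : Set ℝ := Ico (left a) (left a + width a)

lemma left_nil : left [] = 0 := rfl

lemma width_nil : width [] = 1 := rfl

lemma cell_nil : cell [] = Ico 0 1 := by simp [cell, left_nil, width_nil]

lemma left_append (a : List ℕ) (d : ℕ) : left (a ++ [d]) = left a + width a * (1 - 2⁻¹ ^ d) := by
  simp [left, width, cellBounds, cellStep]

lemma width_append (a : List ℕ) (d : ℕ) : width (a ++ [d]) = width a * 2⁻¹ ^ (d + 1) := by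
  simp [width, cellBounds, cellStep]

lemma width_pos (a : List ℕ) : 0 < width a := by
  induction a using List.reverseRecOn with
  | nil => simp [width_nil]
  | append_singleton a d ih => rw [width_append]; positivity

lemma width_le_pow (a : List ℕ) : width a ≤ 2⁻¹ ^ a.length := by
  induction a using List.reverseRecOn with
  | nil => simp [width_nil]
  | append_singleton a d ih =>
    rw [width_append, List.length_append, List.length_singleton, pow_succ]
    exact mul_le_mul ih (pow_le_of_le_one (by norm_num) (by norm_num) d.succ_ne_zero)
      (by positivity) (by positivity : (0 : ℝ) ≤ 2⁻¹ ^ a.length)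

lemma left_mem_cell (a : List ℕ) : left a ∈ cell a := by
  simp [cell, width_pos]

lemma left_append_zero (a : List ℕ) : left (a ++ [0]) = left a := by
  simp [left_append]

lemma right_append (a : List ℕ) (d : ℕ) :
    left (a ++ [d]) + width (a ++ [d]) = left (a ++ [d + 1]) := by
  rw [left_append, left_append, width_append, pow_succ]
  ring

lemma left_append_strictMono (a : List ℕ) : StrictMono fun d => left (a ++ [d]) := by
  refine strictMono_nat_of_lt_succ fun d => ?_
  rw [← right_append]
  linarith [width_pos (a ++ [d])]

lemma right_append_lt (a : List ℕ) (d : ℕ) :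
    left (a ++ [d]) + width (a ++ [d]) < left a + width a := by
  rw [right_append, left_append]
  have : (0 : ℝ) < 2⁻¹ ^ (d + 1) := by positivity
  nlinarith [width_pos a]

lemma cell_append_subset (a : List ℕ) (d : ℕ) : cell (a ++ [d]) ⊆ cell a := by
  refine Ico_subset_Ico ?_ (right_append_lt a d).le
  rw [← left_append_zero]
  exact (left_append_strictMono a).monotone (Nat.zero_le d)

lemma cell_subset_of_prefix {a b : List ℕ} (h : a <+: b) : cell b ⊆ cell a := by
  obtain ⟨l, rfl⟩ := h
  induction l using List.reverseRecOn with
  | nil => simp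
  | append_singleton l d ih =>
    rw [← List.append_assoc]
    exact (cell_append_subset _ d).trans ih

lemma right_le_one (a : List ℕ) : left a + width a ≤ 1 := by
  have h := cell_subset_of_prefix (List.nil_prefix (l := a))
  rw [cell_nil, cell, Ico_subset_Ico_iff (by linarith [width_pos a])] at h
  exact h.2

lemma disjoint_cell_append {a : List ℕ} {d e : ℕ} (h : d ≠ e) :
    Disjoint (cell (a ++ [d])) (cell (a ++ [e])) := by
  wlog hde : d < e generalizing d e
  · exact (this h.symm (h.lt_or_gt.resolve_left hde)).symm
  refine Set.disjoint_left.2 fun x hd he => ?_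
  have := (left_append_strictMono a).monotone (Nat.succ_le_of_lt hde)
  rw [← right_append] at this
  exact absurd (hd.2.trans_le this) (not_lt.2 he.1)

lemma disjoint_cell_restr {s t : ℕ → ℕ} {n : ℕ} (h : restr s n ≠ restr t n) :
    Disjoint (cell (restr s n)) (cell (restr t n)) := by
  induction n with
  | zero => exact absurd rfl h
  | succ n ih =>
    rw [restr_succ, restr_succ] at h ⊢
    by_cases hn : restr s n = restr t n
    · rw [hn] at h ⊢
      exact disjoint_cell_append fun hst => h (by rw [hst])
    · exact (ih hn).mono (cell_append_subset _ _) (cell_append_subset _ _)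

/-- The index of the child of `cell a` containing `x`: `left (a ++ [d + 1])` is the right end of
the `d`-th child. -/
def digit (x : ℝ) (a : List ℕ) : ℕ := sInf {d | x < left (a ++ [d + 1])}

lemma mem_cell_digit {x : ℝ} {a : List ℕ} (hx : x ∈ cell a) : x ∈ cell (a ++ [digit x a]) := by
  have hne : {d | x < left (a ++ [d + 1])}.Nonempty := by
    obtain ⟨d, hd⟩ := exists_pow_lt_of_lt_one
      (div_pos (sub_pos.2 hx.2) (width_pos a)) (by norm_num : (2⁻¹ : ℝ) < 1)
    refine ⟨d, ?_⟩
    rw [lt_div_iff₀ (width_pos a)] at hd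
    have : (2⁻¹ : ℝ) ^ (d + 1) ≤ 2⁻¹ ^ d := pow_le_pow_of_le_one (by norm_num) (by norm_num) d.le_succ
    simp only [mem_ofPred_eq, left_append]
    nlinarith [width_pos a]
  refine ⟨?_, (right_append a _).symm ▸ Nat.sInf_mem hne⟩
  cases h : digit x a with
  | zero => exact left_append_zero a ▸ hx.1
  | succ k => exact not_lt.1 (Nat.notMem_of_lt_sInf (by omega : k < digit x a))

def cellPoint (q : ℕ → ℕ) : ℝ := ⨆ n, left (restr q n)

lemma left_restr_lt_right (q : ℕ → ℕ) (k n : ℕ) :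
    left (restr q k) < left (restr q n) + width (restr q n) := by
  have hk := cell_subset_of_prefix (restr_prefix_restr q (le_max_left k n))
  have hn := cell_subset_of_prefix (restr_prefix_restr q (le_max_right k n))
  exact ((hk (left_mem_cell _)).1.trans_lt (hn (left_mem_cell _)).2)

lemma cellPoint_mem_cell (q : ℕ → ℕ) (n : ℕ) : cellPoint q ∈ cell (restr q n) := by
  have hbdd : BddAbove (range fun k => left (restr q k)) :=
    ⟨_, forall_mem_range.2 fun k => (left_restr_lt_right q k 0).le⟩
  refine ⟨le_ciSup hbdd n, ?_⟩
  calc cellPoint q ≤ left (restr q (n + 1)) + width (restr q (n + 1)) :=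
        ciSup_le fun k => (left_restr_lt_right q k (n + 1)).le
    _ < left (restr q n) + width (restr q n) := by
        rw [restr_succ]; exact right_append_lt _ _

lemma cellPoint_mem_cell_iff {s t : ℕ → ℕ} {n : ℕ} :
    cellPoint s ∈ cell (restr t n) ↔ restr s n = restr t n := by
  refine ⟨fun h => ?_, fun h => h ▸ cellPoint_mem_cell s n⟩
  by_contra hst
  exact Set.disjoint_left.1 (disjoint_cell_restr hst) (cellPoint_mem_cell s n) h

lemma cellPoint_eq_of_forall_mem_cell {q : ℕ → ℕ} {x : ℝ} (h : ∀ n, x ∈ cell (restr q n)) :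
    cellPoint q = x := by
  refine eq_of_forall_dist_le fun ε hε => ?_
  obtain ⟨n, hn⟩ := exists_pow_lt_of_lt_one hε (by norm_num : (2⁻¹ : ℝ) < 1)
  have hw := width_le_pow (restr q n)
  rw [length_restr] at hw
  have hq := cellPoint_mem_cell q n
  have hx := h n
  rw [Real.dist_eq, abs_le]
  constructor <;> linarith [hq.1, hq.2, hx.1, hx.2]

lemma cellPoint_strictMono : StrictMono fun q : Lex (ℕ → ℕ) => cellPoint (ofLex q) := by
  rintro (q : ℕ → ℕ) (p : ℕ → ℕ) ⟨n, hqp, hn⟩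
  have hrestr : restr q n = restr p n := restr_eq_restr_iff.2 hqp
  calc cellPoint (ofLex q) < left (restr q (n + 1)) + width (restr q (n + 1)) :=
        (cellPoint_mem_cell q (n + 1)).2
    _ ≤ left (restr p (n + 1)) := by
        rw [restr_succ, restr_succ, hrestr, right_append]
        exact (left_append_strictMono _).monotone hn
    _ ≤ cellPoint (ofLex p) := (cellPoint_mem_cell p (n + 1)).1

lemma cellPoint_le_cellPoint_iff {q p : ℕ → ℕ} :
    cellPoint q ≤ cellPoint p ↔ toLex q ≤ toLex p :=
  cellPoint_strictMono.le_iff_le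

def digitsPrefix (x : ℝ) : ℕ → List ℕ
  | 0 => []
  | n + 1 => digitsPrefix x n ++ [digit x (digitsPrefix x n)]

def digits (x : ℝ) (n : ℕ) : ℕ := digit x (digitsPrefix x n)

lemma restr_digits (x : ℝ) (n : ℕ) : restr (digits x) n = digitsPrefix x n := by
  induction n with
  | zero => rfl
  | succ n ih => rw [restr_succ, ih]; rfl

lemma range_cellPoint : range cellPoint = Ico 0 1 := by
  refine Subset.antisymm (range_subset_iff.2 fun q => cell_nil ▸ cellPoint_mem_cell q 0)
    fun x hx => ⟨digits x, cellPoint_eq_of_forall_mem_cell fun n => ?_⟩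
  rw [restr_digits]
  induction n with
  | zero => exact cell_nil ▸ hx
  | succ n ih => exact mem_cell_digit ih

lemma cellPoint_mem_Ico (q : ℕ → ℕ) : cellPoint q ∈ Ico 0 1 :=
  range_cellPoint ▸ mem_range_self q

lemma intCast_add_mem_Ico_iff {z z' : ℤ} {x x' b : ℝ} (hx : 0 ≤ x) (hx' : x' ∈ Ico 0 1)
    (hb : b ≤ 1) : (z' + x' : ℝ) ∈ Ico (z + x) (z + b) ↔ z' = z ∧ x' ∈ Ico x b := by
  constructor
  · rintro ⟨h1, h2⟩
    have hz : z' = z := by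
      rw [← add_zero z', ← Int.floor_eq_zero_iff.2 hx', ← Int.floor_intCast_add, Int.floor_eq_iff]
      constructor <;> linarith
    subst hz
    constructor <;> simp_all
  · rintro ⟨rfl, h1, h2⟩
    constructor <;> linarith

def baireToReal (q : ℕ → ℕ) : ℝ := Equiv.intEquivNat.symm (q 0) + cellPoint (tail q)

def cylinderEnd (q : ℕ → ℕ) (m : ℕ) : ℝ :=
  Equiv.intEquivNat.symm (q 0) + (left (restr (tail q) m) + width (restr (tail q) m))

lemma baireToReal_mem_Ico_iff {q r : ℕ → ℕ} {m : ℕ} :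
    baireToReal r ∈ Ico (baireToReal q) (cylinderEnd q m) ↔
      toLex q ≤ toLex r ∧ restr r (m + 1) = restr q (m + 1) := by
  have hq := cellPoint_mem_cell (tail q) m
  have hIco : cellPoint (tail r) ∈ Ico (cellPoint (tail q)) (left (restr (tail q) m) +
      width (restr (tail q) m)) ↔ cellPoint (tail q) ≤ cellPoint (tail r) ∧
        cellPoint (tail r) ∈ cell (restr (tail q) m) :=
    ⟨fun h => ⟨h.1, hq.1.trans h.1, h.2⟩, fun h => ⟨h.1, h.2.2⟩⟩
  rw [baireToReal, baireToReal, cylinderEnd, intCast_add_mem_Ico_iff (cellPoint_mem_Ico _).1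
    (cellPoint_mem_Ico _) (right_le_one _), hIco, cellPoint_le_cellPoint_iff,
    cellPoint_mem_cell_iff, restr_succ_eq_cons, restr_succ_eq_cons, List.cons_eq_cons,
    Equiv.apply_eq_iff_eq]
  constructor
  · rintro ⟨h0, hle, hm⟩
    exact ⟨(toLex_le_toLex_iff_tail h0.symm).2 hle, h0, hm⟩
  · rintro ⟨hle, h0, hm⟩
    exact ⟨h0, (toLex_le_toLex_iff_tail h0.symm).1 hle, hm⟩

lemma baireToReal_lt_cylinderEnd (q : ℕ → ℕ) (m : ℕ) : baireToReal q < cylinderEnd q m :=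
  (baireToReal_mem_Ico_iff.2 ⟨le_rfl, rfl⟩).2

lemma cylinderEnd_le (q : ℕ → ℕ) (m : ℕ) : cylinderEnd q m ≤ baireToReal q + 2⁻¹ ^ m := by
  have hw := width_le_pow (restr (tail q) m)
  rw [length_restr] at hw
  rw [cylinderEnd, baireToReal]
  linarith [(cellPoint_mem_cell (tail q) m).1]

lemma baireToReal_injective : Injective baireToReal := by
  intro q r h
  funext k
  have hk : baireToReal r ∈ Ico (baireToReal q) (cylinderEnd q k) := by
    rw [← h]; exact left_mem_Ico.2 (baireToReal_lt_cylinderEnd q k)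
  exact (restr_eq_restr_iff.1 (baireToReal_mem_Ico_iff.1 hk).2 k k.lt_succ_self).symm

lemma baireToReal_surjective : Surjective baireToReal := by
  intro x
  obtain ⟨p, hp⟩ : Int.fract x ∈ range cellPoint :=
    range_cellPoint ▸ ⟨Int.fract_nonneg x, Int.fract_lt_one x⟩
  refine ⟨fun n => Nat.casesOn n (Equiv.intEquivNat ⌊x⌋) p, ?_⟩
  change ((Equiv.intEquivNat.symm (Equiv.intEquivNat ⌊x⌋) : ℤ) : ℝ) + cellPoint p = x
  rw [Equiv.symm_apply_apply, hp, Int.floor_add_fract]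

def baireEquivReal : (ℕ → ℕ) ≃ ℝ :=
  Equiv.ofBijective baireToReal ⟨baireToReal_injective, baireToReal_surjective⟩

lemma fruit_schemeS (r : ℕ → ℕ) : fruit SchemeS r = {r} := by
  ext s
  simp only [fruit, SchemeS, mem_iInter, mem_ofPred_eq, mem_singleton_iff, length_restr]
  exact ⟨fun h => funext fun k => restr_eq_restr_iff.1 (h (k + 1)) k k.lt_succ_self,
    fun h _ => h ▸ rfl⟩

lemma mem_cut_schemeS_union_iff {p r : ℕ → ℕ} {n : ℕ} :
    r ∈ cut SchemeS p n ∪ {p} ↔ toLex p ≤ toLex r ∧ restr r n = restr p n := by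
  have hcut : cut SchemeS p n = rsequences p n := by simp [cut, fruit_schemeS]
  simp only [hcut, rsequences, mem_union, mem_ofPred_eq, mem_singleton_iff, tri_iff_toLex_lt,
    le_iff_lt_or_eq, eq_comm (a := restr p n)]
  constructor
  · rintro (h | rfl)
    exacts [⟨Or.inl h.1, h.2⟩, ⟨Or.inr rfl, rfl⟩]
  · rintro ⟨h | h, hn⟩
    exacts [Or.inl ⟨h, hn⟩, Or.inr (toLex.injective h).symm]

lemma isOpen_sorgenfreyTop_of {O : Set ℝ} (h : ∀ x ∈ O, ∃ b, x < b ∧ Ico x b ⊆ O) :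
    IsOpen[sorgenfreyTop] O := by
  refine @isOpen_iff_forall_mem_open _ sorgenfreyTop _ |>.2 fun x hx => ?_
  obtain ⟨b, hxb, hsub⟩ := h x hx
  exact ⟨_, hsub, .basic _ ⟨x, b, rfl⟩, left_mem_Ico.2 hxb⟩

lemma isOpen_sigmaS_of {O : Set (ℕ → ℕ)} (h : ∀ q ∈ O, ∃ n, cut SchemeS q n ∪ {q} ⊆ O) :
    IsOpen[sigmaS] O := by
  refine @isOpen_iff_forall_mem_open _ sigmaS _ |>.2 fun q hq => ?_
  obtain ⟨n, hsub⟩ := h q hq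
  exact ⟨_, hsub, .basic _ ⟨q, n, rfl⟩, Or.inr rfl⟩

lemma continuous_baireToReal : Continuous[sigmaS, sorgenfreyTop] baireToReal := by
  refine continuous_generateFrom_iff.2 ?_
  rintro _ ⟨a, b, rfl⟩
  refine isOpen_sigmaS_of fun q hq => ?_
  obtain ⟨m, hm⟩ := exists_pow_lt_of_lt_one (sub_pos.2 hq.2) (by norm_num : (2⁻¹ : ℝ) < 1)
  refine ⟨m + 1, fun r hr => ?_⟩
  have hr := baireToReal_mem_Ico_iff.2 (mem_cut_schemeS_union_iff.1 hr)
  exact ⟨hq.1.trans hr.1, by linarith [hr.2, cylinderEnd_le q m]⟩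

lemma continuous_baireEquivReal_symm : Continuous[sorgenfreyTop, sigmaS] baireEquivReal.symm := by
  refine continuous_generateFrom_iff.2 ?_
  rintro _ ⟨p, n, rfl⟩
  rw [← Equiv.image_eq_preimage_symm]
  refine isOpen_sorgenfreyTop_of ?_
  rintro _ ⟨q, hq, rfl⟩
  refine ⟨cylinderEnd q n, baireToReal_lt_cylinderEnd q n, fun y hy => ?_⟩
  obtain ⟨r, rfl⟩ := baireEquivReal.surjective y
  obtain ⟨hle, hn⟩ := baireToReal_mem_Ico_iff.1 hy
  rw [mem_cut_schemeS_union_iff] at hq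
  exact ⟨r, mem_cut_schemeS_union_iff.2
    ⟨hq.1.trans hle, (restr_eq_restr_of_le n.le_succ hn).trans hq.2⟩, rfl⟩

end SorgenfreyBaire

/-- The Sorgenfrey line is homeomorphic to `(ℕ → ℕ, σ_𝕊)`. -/
theorem stmt6 : Nonempty (@Homeomorph ℝ (ℕ → ℕ) sorgenfreyTop sigmaS) :=
  ⟨@Homeomorph.mk ℝ (ℕ → ℕ) sorgenfreyTop sigmaS SorgenfreyBaire.baireEquivReal.symm
    SorgenfreyBaire.continuous_baireEquivReal_symm SorgenfreyBaire.continuous_baireToReal⟩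
end
end

section
/- Let R be the strict lexicographic order on the double-arrow space. Then R is asymmetric and the double-arrow space is R-bidirected along itself (i.e., along the dense subset Q = the whole space). -/
/-!
Take `A_r` to be the points `(x, 1)` and `A_l` the points `(x, 0)`. A point `(x, 1)` is
isolated from the left: it is the bottom `(0, 1)` or covers `(x, 0)`. So `[(x, 1), →)` is an
open neighbourhood in which it is the least element. On the other hand every interval
`((x, 1), u)` contains points of both kinds, so `(x, 1)` is a limit from the right of points
`y` for which `(←, y)` is open. The points `(x, 0)` are handled dually, and density of
both classes follows from the same intervals.
-/

open Set Filter Topology TopologicalSpace Function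

noncomputable section

/-- The underlying set of the double-arrow space, as a subset of `ℝ ×ₗ Bool`
(with `false` playing the role of `0` and `true` the role of `1`). -/
def DASet : Set (ℝ ×ₗ Bool) :=
  {x | (0 < (ofLex x).1 ∧ (ofLex x).1 ≤ 1 ∧ (ofLex x).2 = false) ∨
       (0 ≤ (ofLex x).1 ∧ (ofLex x).1 < 1 ∧ (ofLex x).2 = true)}

/-- The order topology on the double-arrow space, induced by the lexicographic order. -/
def DATop : TopologicalSpace ↥DASet := Preorder.topology ↥DASet

/-- An open neighborhood `U` of `x` is `R`-right along `Q`. -/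
def RightNbhd {X : Type*} (τ : TopologicalSpace X) (Q : Set X) (R : X → X → Prop)
    (x : X) (U : Set X) : Prop :=
  IsOpen[τ] U ∧ x ∈ U ∧ ∀ y ∈ (U \ {x}) ∩ Q, R x y

/-- An open neighborhood `U` of `x` is `R`-left along `Q`. -/
def LeftNbhd {X : Type*} (τ : TopologicalSpace X) (Q : Set X) (R : X → X → Prop)
    (x : X) (U : Set X) : Prop :=
  IsOpen[τ] U ∧ x ∈ U ∧ ∀ y ∈ (U \ {x}) ∩ Q, R y x

/-- The point `x` looks to the `R`-right along `Q`. -/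
def LooksRight {X : Type*} (τ : TopologicalSpace X) (Q : Set X) (R : X → X → Prop)
    (x : X) : Prop :=
  (∃ U : Set X, RightNbhd τ Q R x U) ∧
  ∀ U : Set X, IsOpen[τ] U → x ∈ U →
    ∃ y ∈ (U \ {x}) ∩ Q, {z | R z y} ∈ @nhds X τ x

/-- The point `x` looks to the `R`-left along `Q`. -/
def LooksLeft {X : Type*} (τ : TopologicalSpace X) (Q : Set X) (R : X → X → Prop)
    (x : X) : Prop :=
  (∃ U : Set X, LeftNbhd τ Q R x U) ∧
  ∀ U : Set X, IsOpen[τ] U → x ∈ U →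
    ∃ y ∈ (U \ {x}) ∩ Q, {z | R y z} ∈ @nhds X τ x

/-- `(X, τ)` is `R`-bidirected along `Q`. -/
def Bidirected {X : Type*} (τ : TopologicalSpace X) (Q : Set X) (R : X → X → Prop) : Prop :=
  ∃ Al Ar : Set X, @Dense X τ Al ∧ @Dense X τ Ar ∧ Al ∪ Ar = Set.univ ∧ Al ∩ Ar = ∅ ∧
    (∀ x ∈ Ar, LooksRight τ Q R x) ∧ (∀ x ∈ Al, LooksLeft τ Q R x)

section LinearOrder

variable {X : Type*} [TopologicalSpace X] [LinearOrder X]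

lemma Ici_mem_nhds_of_nhdsLT_eq_bot {x : X} (h : 𝓝[<] x = ⊥) : Ici x ∈ 𝓝 x := by
  rw [← nhdsLT_sup_nhdsGE, h, bot_sup_eq]
  exact self_mem_nhdsWithin

lemma Iic_mem_nhds_of_nhdsGT_eq_bot {x : X} (h : 𝓝[>] x = ⊥) : Iic x ∈ 𝓝 x := by
  rw [← nhdsGT_sup_nhdsLE, h, bot_sup_eq]
  exact self_mem_nhdsWithin

variable [OrderClosedTopology X]

lemma looksRight_lt_of_nhdsLT_eq_bot {x : X} (hl : 𝓝[<] x = ⊥) [(𝓝[>] x).NeBot] :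
    LooksRight ‹_› univ (· < ·) x := by
  refine ⟨?_, fun U hU hxU => ?_⟩
  · obtain ⟨U, hUx, hU, hxU⟩ := mem_nhds_iff.mp (Ici_mem_nhds_of_nhdsLT_eq_bot hl)
    exact ⟨U, hU, hxU, fun y ⟨⟨hyU, hyx⟩, _⟩ => (hUx hyU).lt_of_ne' hyx⟩
  · obtain ⟨y, hyU, hxy⟩ := Filter.nonempty_of_mem <|
      inter_mem (mem_nhdsWithin_of_mem_nhds (hU.mem_nhds hxU)) (self_mem_nhdsWithin (s := Ioi x))
    exact ⟨y, ⟨⟨hyU, hxy.ne'⟩, trivial⟩, Iio_mem_nhds hxy⟩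

lemma looksLeft_lt_of_nhdsGT_eq_bot {x : X} (hr : 𝓝[>] x = ⊥) [(𝓝[<] x).NeBot] :
    LooksLeft ‹_› univ (· < ·) x := by
  refine ⟨?_, fun U hU hxU => ?_⟩
  · obtain ⟨U, hUx, hU, hxU⟩ := mem_nhds_iff.mp (Iic_mem_nhds_of_nhdsGT_eq_bot hr)
    exact ⟨U, hU, hxU, fun y ⟨⟨hyU, hyx⟩, _⟩ => (hUx hyU).lt_of_ne hyx⟩
  · obtain ⟨y, hyU, hyx⟩ := Filter.nonempty_of_mem <|
      inter_mem (mem_nhdsWithin_of_mem_nhds (hU.mem_nhds hxU)) (self_mem_nhdsWithin (s := Iio x))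
    exact ⟨y, ⟨⟨hyU, hyx.ne⟩, trivial⟩, Ioi_mem_nhds hyx⟩

end LinearOrder

namespace DoubleArrow

def fst (x : ↥DASet) : ℝ := (ofLex x.1).1

def snd (x : ↥DASet) : Bool := (ofLex x.1).2

lemma lt_iff {x y : ↥DASet} :
    x < y ↔ fst x < fst y ∨ fst x = fst y ∧ snd x = false ∧ snd y = true := by
  rw [← Subtype.coe_lt_coe, Prod.Lex.lt_iff, Bool.lt_iff]
  rfl

lemma fst_nonneg (x : ↥DASet) : 0 ≤ fst x := by
  rcases x.2 with ⟨h, -, -⟩ | ⟨h, -, -⟩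
  exacts [h.le, h]

lemma fst_le_one (x : ↥DASet) : fst x ≤ 1 := by
  rcases x.2 with ⟨-, h, -⟩ | ⟨-, h, -⟩
  exacts [h, h.le]

lemma fst_pos_of_snd_eq_false {x : ↥DASet} (hx : snd x = false) : 0 < fst x := by
  rcases x.2 with ⟨h, -, -⟩ | ⟨-, -, h⟩
  exacts [h, Bool.noConfusion (hx.symm.trans h)]

lemma fst_lt_one_of_snd_eq_true {x : ↥DASet} (hx : snd x = true) : fst x < 1 := by
  rcases x.2 with ⟨-, -, h⟩ | ⟨-, h, -⟩
  exacts [Bool.noConfusion (hx.symm.trans h), h]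

lemma exists_fst_eq_snd_eq {r : ℝ} (h0 : 0 < r) (h1 : r < 1) (b : Bool) :
    ∃ x : ↥DASet, fst x = r ∧ snd x = b := by
  cases b
  · exact ⟨⟨toLex (r, false), Or.inl ⟨h0, h1.le, rfl⟩⟩, rfl, rfl⟩
  · exact ⟨⟨toLex (r, true), Or.inr ⟨h0.le, h1, rfl⟩⟩, rfl, rfl⟩

lemma fst_le_fst_of_lt {x y : ↥DASet} (h : x < y) : fst x ≤ fst y := by
  rcases lt_iff.1 h with h | ⟨h, -⟩
  exacts [h.le, h.le]

lemma fst_lt_fst_of_lt_of_snd_eq_true {x y : ↥DASet} (h : x < y) (hx : snd x = true) :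
    fst x < fst y := by
  rcases lt_iff.1 h with h | ⟨-, h, -⟩
  exacts [h, Bool.noConfusion (hx.symm.trans h)]

lemma fst_lt_fst_of_lt_of_snd_eq_false {x y : ↥DASet} (h : x < y) (hy : snd y = false) :
    fst x < fst y := by
  rcases lt_iff.1 h with h | ⟨-, -, h⟩
  exacts [h, Bool.noConfusion (hy.symm.trans h)]

lemma exists_snd_eq_mem_Ioo {x y : ↥DASet} (h : fst x < fst y) (b : Bool) :
    ∃ z ∈ Ioo x y, snd z = b := by
  obtain ⟨z, hz, hzb⟩ := exists_fst_eq_snd_eq (r := (fst x + fst y) / 2)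
    (by linarith [fst_nonneg x]) (by linarith [fst_le_one y]) b
  exact ⟨z, ⟨lt_iff.2 (Or.inl (by linarith)), lt_iff.2 (Or.inl (by linarith))⟩, hzb⟩

lemma exists_gt_of_snd_eq_true {x : ↥DASet} (hx : snd x = true) : ∃ y, x < y := by
  have := fst_lt_one_of_snd_eq_true hx
  obtain ⟨y, hy, -⟩ := exists_fst_eq_snd_eq (r := (fst x + 1) / 2)
    (by linarith [fst_nonneg x]) (by linarith) true
  exact ⟨y, lt_iff.2 (Or.inl (by linarith))⟩

lemma exists_lt_of_snd_eq_false {x : ↥DASet} (hx : snd x = false) : ∃ y, y < x := by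
  have := fst_pos_of_snd_eq_false hx
  obtain ⟨y, hy, -⟩ := exists_fst_eq_snd_eq (r := fst x / 2)
    (by linarith) (by linarith [fst_le_one x]) true
  exact ⟨y, lt_iff.2 (Or.inl (by linarith))⟩

section Topology

variable [TopologicalSpace ↥DASet] [OrderTopology ↥DASet]

lemma nhdsLT_eq_bot_of_snd_eq_true {x : ↥DASet} (hx : snd x = true) : 𝓝[<] x = ⊥ := by
  rw [nhdsLT_eq_bot_iff]
  rcases (fst_nonneg x).eq_or_lt with h0 | h0
  · refine Or.inl fun z => not_lt.1 fun hzx => ?_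
    cases hz : snd z
    · linarith [fst_pos_of_snd_eq_false hz, fst_le_fst_of_lt hzx]
    · linarith [fst_nonneg z, fst_lt_fst_of_lt_of_snd_eq_true hzx hz]
  · obtain ⟨y, hy, hyb⟩ := exists_fst_eq_snd_eq h0 (fst_lt_one_of_snd_eq_true hx) false
    refine Or.inr ⟨y, lt_iff.2 (Or.inr ⟨hy, hyb, hx⟩), fun z hyz hzx => ?_⟩
    cases hz : snd z
    · linarith [fst_lt_fst_of_lt_of_snd_eq_false hyz hz, fst_le_fst_of_lt hzx]
    · linarith [fst_le_fst_of_lt hyz, fst_lt_fst_of_lt_of_snd_eq_true hzx hz]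

lemma nhdsGT_eq_bot_of_snd_eq_false {x : ↥DASet} (hx : snd x = false) : 𝓝[>] x = ⊥ := by
  rw [nhdsGT_eq_bot_iff]
  rcases (fst_le_one x).eq_or_lt with h1 | h1
  · refine Or.inl fun z => not_lt.1 fun hxz => ?_
    cases hz : snd z
    · linarith [fst_le_one z, fst_lt_fst_of_lt_of_snd_eq_false hxz hz]
    · linarith [fst_lt_one_of_snd_eq_true hz, fst_le_fst_of_lt hxz]
  · obtain ⟨y, hy, hyb⟩ := exists_fst_eq_snd_eq (fst_pos_of_snd_eq_false hx) h1 true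
    refine Or.inr ⟨y, lt_iff.2 (Or.inr ⟨hy.symm, hx, hyb⟩), fun z hxz hzy => ?_⟩
    cases hz : snd z
    · linarith [fst_lt_fst_of_lt_of_snd_eq_false hxz hz, fst_le_fst_of_lt hzy]
    · linarith [fst_le_fst_of_lt hxz, fst_lt_fst_of_lt_of_snd_eq_true hzy hz]

lemma frequently_snd_eq_nhdsGT {x : ↥DASet} (hx : snd x = true) (b : Bool) :
    ∃ᶠ y in 𝓝[>] x, snd y = b :=
  (nhdsGT_basis_of_exists_gt (exists_gt_of_snd_eq_true hx)).frequently_iff.2 fun _ hxy =>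
    exists_snd_eq_mem_Ioo (fst_lt_fst_of_lt_of_snd_eq_true hxy hx) b

lemma frequently_snd_eq_nhdsLT {x : ↥DASet} (hx : snd x = false) (b : Bool) :
    ∃ᶠ y in 𝓝[<] x, snd y = b :=
  (nhdsLT_basis_of_exists_lt (exists_lt_of_snd_eq_false hx)).frequently_iff.2 fun _ hyx =>
    exists_snd_eq_mem_Ioo (fst_lt_fst_of_lt_of_snd_eq_false hyx hx) b

lemma dense_setOf_snd_eq (b : Bool) : Dense {x : ↥DASet | snd x = b} := fun x => by
  rw [mem_closure_iff_frequently]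
  cases hx : snd x
  · exact (frequently_snd_eq_nhdsLT hx b).filter_mono nhdsWithin_le_nhds
  · exact (frequently_snd_eq_nhdsGT hx b).filter_mono nhdsWithin_le_nhds

lemma looksRight_of_snd_eq_true {x : ↥DASet} (hx : snd x = true) :
    LooksRight ‹_› univ (· < ·) x :=
  have : (𝓝[>] x).NeBot :=
    (frequently_true_iff_neBot _).1 ((frequently_snd_eq_nhdsGT hx true).mono fun _ _ => trivial)
  looksRight_lt_of_nhdsLT_eq_bot (nhdsLT_eq_bot_of_snd_eq_true hx)

lemma looksLeft_of_snd_eq_false {x : ↥DASet} (hx : snd x = false) :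
    LooksLeft ‹_› univ (· < ·) x :=
  have : (𝓝[<] x).NeBot :=
    (frequently_true_iff_neBot _).1 ((frequently_snd_eq_nhdsLT hx true).mono fun _ _ => trivial)
  looksLeft_lt_of_nhdsGT_eq_bot (nhdsGT_eq_bot_of_snd_eq_false hx)

end Topology

end DoubleArrow

/-- The strict lexicographic order on the double-arrow space is asymmetric, and
the double-arrow space is bidirected with respect to it along itself. -/
theorem stmt13 :
    (∀ a b : ↥DASet, a < b → ¬ b < a) ∧
    Bidirected DATop Set.univ (fun a b : ↥DASet => a < b) := by
  let := DATop
  have : OrderTopology ↥DASet := ⟨rfl⟩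
  refine ⟨fun _ _ => lt_asymm, {x | DoubleArrow.snd x = false}, {x | DoubleArrow.snd x = true},
    DoubleArrow.dense_setOf_snd_eq false, DoubleArrow.dense_setOf_snd_eq true, ?_, ?_,
    fun _ => DoubleArrow.looksRight_of_snd_eq_true, fun _ => DoubleArrow.looksLeft_of_snd_eq_false⟩
  · ext x
    cases DoubleArrow.snd x <;> simp
  · ext x
    cases DoubleArrow.snd x <;> simp
end
end
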